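/- arXiv:2312.09963 — 4 statements merged into one kernel-verified Lean document; each statement's English description precedes it below -/
import Mathlib

section
/- For every numeric planning problem Π, the standard encoding Π^S of Π is correct: for every bound n ≥ 0, every action sequence in (Π^S_n)^{−1} is a valid plan for Π. -/
open scoped Classical

namespace PatternPlanning

/-! ## Numeric planning problems -/

/-- A linear expression `∑ w, coeff w * w + const` over the numeric variables `VN`. -/
structure LinExpr (VN : Type) where
  coeff : VN → ℚ
  const : ℚ

/-- Value of a linear expression under a numeric valuation. -/
def LinExpr.eval {VN : Type} [Fintype VN] (e : LinExpr VN) (ν : VN → ℚ) : ℚ :=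
  (∑ w, e.coeff w * ν w) + e.const

/-- The comparison operators `≥ , > , =` of numeric conditions `ψ ⊵ 0`. -/
inductive CompOp : Type
  | ge | gt | eq

/-- `op.holds q` means `q ⊵ 0`. -/
def CompOp.holds : CompOp → ℚ → Prop
  | .ge, q => 0 ≤ q
  | .gt, q => 0 < q
  | .eq, q => q = 0

/-- A numeric condition `ψ ⊵ 0`. -/
structure NumCond (VN : Type) where
  expr : LinExpr VN
  op : CompOp

def NumCond.holds {VN : Type} [Fintype VN] (c : NumCond VN) (ν : VN → ℚ) : Prop :=
  c.op.holds (c.expr.eval ν)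

/-- A propositional condition `v = ⊤` or `v = ⊥`. -/
inductive PropCond (VB : Type)
  | isTrue (v : VB)
  | isFalse (v : VB)

def PropCond.holds {VB : Type} : PropCond VB → (VB → Bool) → Prop
  | .isTrue v, β => β v = true
  | .isFalse v, β => β v = false

/-- An action: propositional and numeric preconditions, Boolean effects `v := ⊤/⊥`
and numeric effects `w := ψ` (each variable assigned at most once, enforced by
the functional representation of the effects). -/
structure Act (VB VN : Type) where
  preB : List (PropCond VB)
  preN : List (NumCond VN)
  effB : VB → Option Bool
  effN : VN → Option (LinExpr VN)

def Act.assignsB {VB VN : Type} (a : Act VB VN) (v : VB) : Prop := a.effB v ≠ none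
def Act.assignsN {VB VN : Type} (a : Act VB VN) (x : VN) : Prop := a.effN x ≠ none

/-- The effect `x := e` is a linear increment `x += ψ` : `e = x + ψ` with `ψ` not
containing any variable assigned by `a`. -/
def Act.isIncr {VB VN : Type} (a : Act VB VN) (x : VN) (e : LinExpr VN) : Prop :=
  e.coeff x = 1 ∧ ∀ y, a.assignsN y → y ≠ x → e.coeff y = 0

/-- The increment part `ψ` of a linear increment `x := x + ψ`. -/
noncomputable def incrPart {VN : Type} (e : LinExpr VN) (x : VN) : LinExpr VN :=
  ⟨Function.update e.coeff x 0, e.const⟩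

/-- The (general) assignment `x := e` is simple: `e` contains no variable assigned by `a`. -/
def Act.isSimpleA {VB VN : Type} (a : Act VB VN) (e : LinExpr VN) : Prop :=
  ∀ y, a.assignsN y → e.coeff y = 0

/-- An action is eligible for rolling. -/
def Act.eligible {VB VN : Type} (a : Act VB VN) : Prop :=
  (∀ v, PropCond.isFalse v ∈ a.preB → a.effB v ≠ some true) ∧
  (∀ v, PropCond.isTrue v ∈ a.preB → a.effB v ≠ some false) ∧
  (∀ x e, a.effN x = some e → a.isIncr x e ∨ a.isSimpleA e) ∧
  (∃ x e, a.effN x = some e ∧ a.isIncr x e)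

/-- A state: values of the Boolean and numeric variables. -/
structure PState (VB VN : Type) where
  boolVal : VB → Bool
  numVal : VN → ℚ

/-- `a` is executable in `s`: all preconditions of `a` hold in `s`. -/
def Act.execIn {VB VN : Type} [Fintype VN] (a : Act VB VN) (s : PState VB VN) : Prop :=
  (∀ c ∈ a.preB, c.holds s.boolVal) ∧ (∀ c ∈ a.preN, c.holds s.numVal)

/-- The result of executing `a` in `s`. -/
def Act.result {VB VN : Type} [Fintype VN] (a : Act VB VN) (s : PState VB VN) : PState VB VN where
  boolVal := fun v => (a.effB v).getD (s.boolVal v)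
  numVal := fun x =>
    match a.effN x with
    | none => s.numVal x
    | some e => e.eval s.numVal

/-- Execution of a sequence of actions: `some` of the last induced state if the
sequence is executable, `none` otherwise. -/
noncomputable def execSeq {VB VN A : Type} [Fintype VN] (acts : A → Act VB VN) :
    List A → PState VB VN → Option (PState VB VN)
  | [], s => some s
  | a :: rest, s =>
      if (acts a).execIn s then execSeq acts rest ((acts a).result s) else none

/-- Goal formulas: propositional combinations of propositional and numeric conditions. -/
inductive Formula (VB VN : Type)
  | prop (c : PropCond VB)
  | num (c : NumCond VN)
  | not (f : Formula VB VN)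
  | and (f g : Formula VB VN)
  | or (f g : Formula VB VN)

def Formula.holds {VB VN : Type} [Fintype VN] :
    Formula VB VN → (VB → Bool) → (VN → ℚ) → Prop
  | .prop c, β, _ => c.holds β
  | .num c, _, ν => c.holds ν
  | .not f, β, ν => ¬ f.holds β ν
  | .and f g, β, ν => f.holds β ν ∧ g.holds β ν
  | .or f g, β, ν => f.holds β ν ∨ g.holds β ν

/-- A numeric planning problem `Π = ⟨V_B, V_N, A, I, G⟩` (the sets of variables and
of actions are the types `VB`, `VN`, `A`). -/
structure Problem (VB VN A : Type) where
  acts : A → Act VB VN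
  init : PState VB VN
  goals : List (Formula VB VN)

def Problem.goalSat {VB VN A : Type} [Fintype VN] (P : Problem VB VN A)
    (β : VB → Bool) (ν : VN → ℚ) : Prop :=
  ∀ f ∈ P.goals, f.holds β ν

/-- `α` is a valid plan for `P`. -/
def Problem.isPlan {VB VN A : Type} [Fintype VN] (P : Problem VB VN A) (α : List A) : Prop :=
  ∃ s, execSeq P.acts α P.init = some s ∧ P.goalSat s.boolVal s.numVal

def Problem.hasPlan {VB VN A : Type} [Fintype VN] (P : Problem VB VN A) : Prop :=
  ∃ α, P.isPlan α

/-! ## ψ[a] : rolled substitution -/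

/-- Value of the variable `x` in `ψ[a]` when the action variable of `a` takes value `k`:
`x + (k-1)·ψ₁` for a linear increment `x += ψ₁`, `ψ₁` for a simple assignment `x := ψ₁`,
`x` otherwise. -/
noncomputable def rolledVarVal {VB VN : Type} [Fintype VN] (a : Act VB VN) (k : ℕ)
    (ν : VN → ℚ) (x : VN) : ℚ :=
  match a.effN x with
  | none => ν x
  | some e =>
      if a.isIncr x e then ν x + ((k : ℚ) - 1) * (incrPart e x).eval ν
      else if a.isSimpleA e then e.eval ν
      else ν x

/-- Value of `ψ[a]` under `ν` when the action variable of `a` takes the value `k`. -/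
noncomputable def rolledEval {VB VN : Type} [Fintype VN] (a : Act VB VN) (k : ℕ)
    (ψ : LinExpr VN) (ν : VN → ℚ) : ℚ :=
  (∑ x, ψ.coeff x * rolledVarVal a k ν x) + ψ.const

/-! ## The rolled-up encoding Π^R and the standard encoding Π^S -/

def occursInPre {VB VN : Type} (a : Act VB VN) (x : VN) : Prop :=
  ∃ c ∈ a.preN, c.expr.coeff x ≠ 0

def occursInEff {VB VN : Type} (a : Act VB VN) (x : VN) : Prop :=
  a.assignsN x ∨ ∃ y e, a.effN y = some e ∧ e.coeff x ≠ 0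

/-- Condition under which `mutex^R(A)` contains `a₁ = 0 ∨ a₂ = 0`. -/
def mutexCond {VB VN : Type} (a₁ a₂ : Act VB VN) : Prop :=
  (∃ v, PropCond.isFalse v ∈ a₁.preB ∧ a₂.effB v = some true) ∨
  (∃ v, PropCond.isTrue v ∈ a₁.preB ∧ a₂.effB v = some false) ∨
  (∃ x, a₁.assignsN x ∧ (occursInEff a₂ x ∨ occursInPre a₂ x))

/-- The symbolic transition relation `T^R(X,A,X')` of the rolled-up encoding, as a
predicate on the values `β,ν` for `X`, `u` for the (ℕ-valued) action variables `A`,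
and `β',ν'` for `X'`. -/
def TR {VB VN A : Type} [Fintype VN] (P : Problem VB VN A)
    (β : VB → Bool) (ν : VN → ℚ) (u : A → ℕ) (β' : VB → Bool) (ν' : VN → ℚ) : Prop :=
  -- pre^R(A)
  (∀ a, 0 < u a →
    (∀ v, PropCond.isFalse v ∈ (P.acts a).preB → β v = false) ∧
    (∀ v, PropCond.isTrue v ∈ (P.acts a).preB → β v = true) ∧
    (∀ c ∈ (P.acts a).preN, c.op.holds (c.expr.eval ν))) ∧
  (∀ a, 1 < u a → ∀ c ∈ (P.acts a).preN,
    c.op.holds (rolledEval (P.acts a) (u a) c.expr ν)) ∧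
  -- eff^R(A)
  (∀ a, 0 < u a →
    (∀ v b, (P.acts a).effB v = some b → β' v = b) ∧
    (∀ x e, (P.acts a).effN x = some e →
      ((P.acts a).isIncr x e → ν' x = ν x + (u a : ℚ) * (incrPart e x).eval ν) ∧
      (¬ (P.acts a).isIncr x e → ν' x = e.eval ν))) ∧
  -- frame^R(V_B ∪ V_N)
  (∀ v, (∀ a, (P.acts a).assignsB v → u a = 0) → β' v = β v) ∧
  (∀ x, (∀ a, (P.acts a).assignsN x → u a = 0) → ν' x = ν x) ∧
  -- mutex^R(A)
  (∀ a₁ a₂, a₁ ≠ a₂ → mutexCond (P.acts a₁) (P.acts a₂) → u a₁ = 0 ∨ u a₂ = 0) ∧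
  -- amo^R(A)
  (∀ a, ¬ (P.acts a).eligible → u a ≤ 1)

/-- The symbolic transition relation `T^S` of the standard encoding: `T^R` plus
`a = 0 ∨ a = 1` for every action. -/
def TS {VB VN A : Type} [Fintype VN] (P : Problem VB VN A)
    (β : VB → Bool) (ν : VN → ℚ) (u : A → ℕ) (β' : VB → Bool) (ν' : VN → ℚ) : Prop :=
  TR P β ν u β' ν' ∧ ∀ a, u a ≤ 1

/-- A (candidate) model of `Π^R_n` / `Π^S_n` : values for the `n+1` copies of the state
variables and the `n` copies of the ℕ-valued action variables. -/
structure RModel (VB VN A : Type) (n : ℕ) where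
  β : Fin (n + 1) → VB → Bool
  ν : Fin (n + 1) → VN → ℚ
  u : Fin n → A → ℕ

def RModel.validWith {VB VN A : Type} {n : ℕ} [Fintype VN] (m : RModel VB VN A n)
    (P : Problem VB VN A)
    (T : (VB → Bool) → (VN → ℚ) → (A → ℕ) → (VB → Bool) → (VN → ℚ) → Prop) : Prop :=
  m.β 0 = P.init.boolVal ∧ m.ν 0 = P.init.numVal ∧
  (∀ i : Fin n, T (m.β i.castSucc) (m.ν i.castSucc) (m.u i) (m.β i.succ) (m.ν i.succ)) ∧
  P.goalSat (m.β (Fin.last n)) (m.ν (Fin.last n))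

/-- `m` is a model of `Π^R_n`. -/
def RModel.validR {VB VN A : Type} {n : ℕ} [Fintype VN] (m : RModel VB VN A n)
    (P : Problem VB VN A) : Prop :=
  m.validWith P (TR P)

/-- `m` is a model of `Π^S_n`. -/
def RModel.validS {VB VN A : Type} {n : ℕ} [Fintype VN] (m : RModel VB VN A n)
    (P : Problem VB VN A) : Prop :=
  m.validWith P (TS P)

/-- The decoding of the rolled-up/standard encoding: the sequences in which each
action `a` occurs `u a` times consecutively. -/
def decodesRolled {A : Type} (u : A → ℕ) (α : List A) : Prop :=
  ∃ l : List A, l.Nodup ∧ (∀ a, a ∈ l) ∧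
    α = l.flatMap (fun a => List.replicate (u a) a)

/-- The sequences of actions associated to the model `m` of `Π^R_n`/`Π^S_n`
(the set `(Π^R_n)⁻¹` is the union of `m.plans` over the models `m`). -/
def RModel.plans {VB VN A : Type} {n : ℕ} (m : RModel VB VN A n) (α : List A) : Prop :=
  ∃ αs : Fin n → List A, (∀ i, decodesRolled (m.u i) (αs i)) ∧ α = (List.ofFn αs).flatten

/-- `Π^R_n` is satisfiable. -/
def satR {VB VN A : Type} [Fintype VN] (P : Problem VB VN A) (n : ℕ) : Prop :=
  ∃ m : RModel VB VN A n, m.validR P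

/-- `Π^S_n` is satisfiable. -/
def satS {VB VN A : Type} [Fintype VN] (P : Problem VB VN A) (n : ℕ) : Prop :=
  ∃ m : RModel VB VN A n, m.validS P

/-! ## The R²∃ <-encoding Π^< -/

/-- Value of `v^{≪,·}` after chaining through the actions of `l`:
the last auxiliary variable of an action of `l` assigning `v`, else the initial value. -/
noncomputable def chainB {VB VN A : Type} (acts : A → Act VB VN) (l : List A)
    (β : VB → Bool) (aux : A → VB → Bool) (v : VB) : Bool :=
  l.foldl (fun val b => if ((acts b).effB v).isSome then aux b v else val) (β v)

noncomputable def chainN {VB VN A : Type} (acts : A → Act VB VN) (l : List A)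
    (ν : VN → ℚ) (aux : A → VN → ℚ) (x : VN) : ℚ :=
  l.foldl (fun val b => if ((acts b).effN x).isSome then aux b x else val) (ν x)

/-- The actions strictly preceding `a` in the total order `ord`. -/
noncomputable def before {A : Type} (ord : List A) (a : A) : List A :=
  ord.takeWhile (fun b => decide (b ≠ a))

/-- The symbolic transition relation `T^<(X,A,X')` of the R²∃ `<`-encoding.
`actb` gives the values of the Boolean action variables, `auxB`/`auxN` the values of the
fresh state variables `v^a`. -/
def Tlt {VB VN A : Type} [Fintype VN] (P : Problem VB VN A) (ord : List A)
    (β : VB → Bool) (ν : VN → ℚ) (actb : A → Bool)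
    (auxB : A → VB → Bool) (auxN : A → VN → ℚ)
    (β' : VB → Bool) (ν' : VN → ℚ) : Prop :=
  -- pre^<(A)
  (∀ a, actb a = true →
    (∀ v, PropCond.isFalse v ∈ (P.acts a).preB →
      chainB P.acts (before ord a) β auxB v = false) ∧
    (∀ v, PropCond.isTrue v ∈ (P.acts a).preB →
      chainB P.acts (before ord a) β auxB v = true) ∧
    (∀ c ∈ (P.acts a).preN,
      c.op.holds (c.expr.eval (chainN P.acts (before ord a) ν auxN)))) ∧
  -- eff^<(A)
  (∀ a v b, (P.acts a).effB v = some b →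
    (actb a = true → auxB a v = b) ∧
    (actb a = false → auxB a v = chainB P.acts (before ord a) β auxB v)) ∧
  (∀ a x e, (P.acts a).effN x = some e →
    (actb a = true → auxN a x = e.eval (chainN P.acts (before ord a) ν auxN)) ∧
    (actb a = false → auxN a x = chainN P.acts (before ord a) ν auxN x)) ∧
  -- frame^<(V_B ∪ V_N)
  (∀ v, β' v = chainB P.acts ord β auxB v) ∧
  (∀ x, ν' x = chainN P.acts ord ν auxN x)

/-- A (candidate) model of `Π^<_n`. -/
structure LtModel (VB VN A : Type) (n : ℕ) where
  β : Fin (n + 1) → VB → Bool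
  ν : Fin (n + 1) → VN → ℚ
  actb : Fin n → A → Bool
  auxB : Fin n → A → VB → Bool
  auxN : Fin n → A → VN → ℚ

def LtModel.valid {VB VN A : Type} {n : ℕ} [Fintype VN] (m : LtModel VB VN A n)
    (P : Problem VB VN A) (ord : List A) : Prop :=
  m.β 0 = P.init.boolVal ∧ m.ν 0 = P.init.numVal ∧
  (∀ i : Fin n, Tlt P ord (m.β i.castSucc) (m.ν i.castSucc) (m.actb i)
      (m.auxB i) (m.auxN i) (m.β i.succ) (m.ν i.succ)) ∧
  P.goalSat (m.β (Fin.last n)) (m.ν (Fin.last n))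

/-- The plan decoded from a model of `Π^<_n`: at each step, the actions of `ord`
whose Boolean action variable is true, in the order of `ord`. -/
def LtModel.plan {VB VN A : Type} {n : ℕ} (m : LtModel VB VN A n) (ord : List A) : List A :=
  (List.ofFn fun i : Fin n => ord.filter (m.actb i)).flatten

/-- `Π^<_n` is satisfiable. -/
def satLt {VB VN A : Type} [Fintype VN] (P : Problem VB VN A) (ord : List A) (n : ℕ) : Prop :=
  ∃ m : LtModel VB VN A n, m.valid P ord

/-! ## The pattern ≺-encoding Π^≺ -/

/-- `σ^{≺₁}(v)` for Boolean `v`, where `≺₁` is the prefix of `pat` of length `j`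
(`act j` is the value of the action variable of the `j`-th occurrence in the pattern). -/
noncomputable def sigB {VB VN A : Type} (acts : A → Act VB VN) (pat : List A)
    (act : ℕ → ℕ) (β : VB → Bool) : ℕ → VB → Bool
  | 0 => β
  | j + 1 => fun v =>
      match pat[j]? with
      | none => sigB acts pat act β j v
      | some a =>
          match (acts a).effB v with
          | some true => sigB acts pat act β j v || decide (0 < act j)
          | some false => sigB acts pat act β j v && decide (act j = 0)
          | none => sigB acts pat act β j v

/-- `σ^{≺₁}(x)` for numeric `x` (`aux j` gives the values of the fresh variables
`x^{≺₁;a}` introduced for the general assignments of the `j`-th occurrence). -/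
noncomputable def sigN {VB VN A : Type} [Fintype VN] (acts : A → Act VB VN) (pat : List A)
    (act : ℕ → ℕ) (aux : ℕ → VN → ℚ) (ν : VN → ℚ) : ℕ → VN → ℚ
  | 0 => ν
  | j + 1 => fun x =>
      match pat[j]? with
      | none => sigN acts pat act aux ν j x
      | some a =>
          match (acts a).effN x with
          | none => sigN acts pat act aux ν j x
          | some e =>
              if (acts a).isIncr x e then
                sigN acts pat act aux ν j x +
                  (act j : ℚ) * (incrPart e x).eval (sigN acts pat act aux ν j)
              else aux j x

/-- The symbolic transition relation `T^≺(X,A,X')` of the pattern `≺`-encoding. -/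
def Tpat {VB VN A : Type} [Fintype VN] (P : Problem VB VN A) (pat : List A)
    (β : VB → Bool) (ν : VN → ℚ) (act : ℕ → ℕ) (aux : ℕ → VN → ℚ)
    (β' : VB → Bool) (ν' : VN → ℚ) : Prop :=
  (∀ (j : ℕ) (hj : j < pat.length),
    -- pre^≺(A)
    (∀ v, PropCond.isFalse v ∈ (P.acts (pat.get ⟨j, hj⟩)).preB → 0 < act j →
      sigB P.acts pat act β j v = false) ∧
    (∀ v, PropCond.isTrue v ∈ (P.acts (pat.get ⟨j, hj⟩)).preB → 0 < act j →
      sigB P.acts pat act β j v = true) ∧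
    (∀ c ∈ (P.acts (pat.get ⟨j, hj⟩)).preN,
      (0 < act j → c.op.holds (c.expr.eval (sigN P.acts pat act aux ν j))) ∧
      (1 < act j → c.op.holds
        (rolledEval (P.acts (pat.get ⟨j, hj⟩)) (act j) c.expr (sigN P.acts pat act aux ν j)))) ∧
    -- eff^≺(A) (for the general assignments)
    (∀ x e, (P.acts (pat.get ⟨j, hj⟩)).effN x = some e →
      ¬ (P.acts (pat.get ⟨j, hj⟩)).isIncr x e →
      (act j = 0 → aux j x = sigN P.acts pat act aux ν j x) ∧
      (0 < act j → aux j x = e.eval (sigN P.acts pat act aux ν j))) ∧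
    -- amo^≺(A)
    (¬ (P.acts (pat.get ⟨j, hj⟩)).eligible → act j ≤ 1)) ∧
  -- frame^≺(V_B ∪ V_N)
  (∀ v, β' v = sigB P.acts pat act β pat.length v) ∧
  (∀ x, ν' x = sigN P.acts pat act aux ν pat.length x)

/-- The sequence decoded from the values `act` of the action variables of the pattern:
the `j`-th occurrence repeated `act j` times, in the order of the pattern. -/
def decodePat {A : Type} (pat : List A) (act : ℕ → ℕ) : List A :=
  (List.ofFn fun j : Fin pat.length => List.replicate (act j.val) (pat.get j)).flatten

/-- A (candidate) model of `Π^≺_n`. -/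
structure PatModel (VB VN A : Type) (n : ℕ) where
  β : Fin (n + 1) → VB → Bool
  ν : Fin (n + 1) → VN → ℚ
  act : Fin n → ℕ → ℕ
  aux : Fin n → ℕ → VN → ℚ

def PatModel.valid {VB VN A : Type} {n : ℕ} [Fintype VN] (m : PatModel VB VN A n)
    (P : Problem VB VN A) (pat : List A) : Prop :=
  m.β 0 = P.init.boolVal ∧ m.ν 0 = P.init.numVal ∧
  (∀ i : Fin n, Tpat P pat (m.β i.castSucc) (m.ν i.castSucc) (m.act i) (m.aux i)
      (m.β i.succ) (m.ν i.succ)) ∧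
  P.goalSat (m.β (Fin.last n)) (m.ν (Fin.last n))

/-- The plan decoded from a model of `Π^≺_n`. -/
def PatModel.plan {VB VN A : Type} {n : ℕ} (m : PatModel VB VN A n) (pat : List A) : List A :=
  (List.ofFn fun i : Fin n => decodePat pat (m.act i)).flatten

/-- `Π^≺_n` is satisfiable. -/
def satPat {VB VN A : Type} [Fintype VN] (P : Problem VB VN A) (pat : List A) (n : ℕ) : Prop :=
  ∃ m : PatModel VB VN A n, m.valid P pat

/-! ## Abstract encodings -/

/-- An abstract encoding `Π^E = ⟨X, A, I(X), T(X,A,X'), G(X)⟩` of a problem: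
`XAsgn` is the type of assignments to the state variables `X ⊇ V_B ∪ V_N`
(with projections giving the values of the variables of `V_B ∪ V_N`), `AAsgn` the type
of assignments to the action variables, `T` the symbolic transition relation and
`decode` its decoding function, associating at least one action sequence to each model. -/
structure Encoding (VB VN A : Type) where
  XAsgn : Type
  AAsgn : Type
  projB : XAsgn → VB → Bool
  projN : XAsgn → VN → ℚ
  T : XAsgn → AAsgn → XAsgn → Prop
  decode : XAsgn → AAsgn → XAsgn → List A → Prop
  decode_exists : ∀ x u x', T x u x' → ∃ α, decode x u x' α

def Encoding.stateOf {VB VN A : Type} (E : Encoding VB VN A) (x : E.XAsgn) : PState VB VN :=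
  ⟨E.projB x, E.projN x⟩

/-- The symbolic transition relation of `E` is correct: every action sequence
corresponding to a model of `T` is executable in the state given by the model and
leads to the state given by the primed variables. -/
def Encoding.correctT {VB VN A : Type} [Fintype VN] (E : Encoding VB VN A)
    (P : Problem VB VN A) : Prop :=
  ∀ x u x', E.T x u x' → ∀ α, E.decode x u x' α →
    execSeq P.acts α (E.stateOf x) = some (E.stateOf x')

/-- A (candidate) model of `Π^E_n`. -/
structure EncModel {VB VN A : Type} (E : Encoding VB VN A) (n : ℕ) where
  xs : Fin (n + 1) → E.XAsgn
  us : Fin n → E.AAsgn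

def EncModel.valid {VB VN A : Type} [Fintype VN] {E : Encoding VB VN A} {n : ℕ}
    (m : EncModel E n) (P : Problem VB VN A) : Prop :=
  E.projB (m.xs 0) = P.init.boolVal ∧ E.projN (m.xs 0) = P.init.numVal ∧
  (∀ i : Fin n, E.T (m.xs i.castSucc) (m.us i) (m.xs i.succ)) ∧
  P.goalSat (E.projB (m.xs (Fin.last n))) (E.projN (m.xs (Fin.last n)))

/-- The action sequences associated to a model of `Π^E_n`
(`(Π^E_n)⁻¹` is the union of `m.plans` over the models `m` of `Π^E_n`). -/
def EncModel.plans {VB VN A : Type} {E : Encoding VB VN A} {n : ℕ}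
    (m : EncModel E n) (α : List A) : Prop :=
  ∃ αs : Fin n → List A,
    (∀ i, E.decode (m.xs i.castSucc) (m.us i) (m.xs i.succ) (αs i)) ∧
    α = (List.ofFn αs).flatten

/-- The quantity `Δ` for an action `a` and an expression `ψ`: the sum, over the linear
increments `x += ψ₁` of `a` with `x` occurring in `ψ`, of `ψ₁` weighted by the coefficient
of `x` in `ψ`. -/
noncomputable def deltaVal {VB VN : Type} [Fintype VN] (a : Act VB VN)
    (ψ : LinExpr VN) (ν : VN → ℚ) : ℚ :=
  ∑ x, ψ.coeff x *
    (match a.effN x with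
     | some e => if a.isIncr x e then (incrPart e x).eval ν else 0
     | none => 0)
/-! In a model of `T^S` every action variable is `0` or `1`, and `mutex^R` forbids two chosen
actions where one writes a numeric variable that the other reads or writes, or falsifies a
propositional precondition of the other. So when the chosen actions are executed one after the
other, in any order, each of them sees its preconditions and the right-hand sides of its effects
exactly as in `X`, and writes the value that `eff^R` prescribes for `X'`. After the actions of a
set `D` have run, every variable written by one of them therefore holds its value in `X'` and
every other variable still holds its value in `X` (`interimState`); `frame^R` identifies the
state after all of them with `X'`. Chaining the steps of a model of `Π^S_n` gives the plan. -/

lemma LinExpr.eval_congr {VN : Type} [Fintype VN] (e : LinExpr VN) {ν₁ ν₂ : VN → ℚ}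
    (h : ∀ x, e.coeff x ≠ 0 → ν₁ x = ν₂ x) : e.eval ν₁ = e.eval ν₂ := by
  unfold LinExpr.eval
  congr 1
  refine Finset.sum_congr rfl fun x _ => ?_
  by_cases hx : e.coeff x = 0
  · simp [hx]
  · rw [h x hx]

lemma add_eval_incrPart {VN : Type} [Fintype VN] {e : LinExpr VN} {x : VN} (hx : e.coeff x = 1)
    (ν : VN → ℚ) : ν x + (incrPart e x).eval ν = e.eval ν := by
  have hsplit : ∀ y, e.coeff y * ν y =
      Function.update e.coeff x 0 y * ν y + if y = x then ν x else 0 := by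
    intro y
    by_cases hy : y = x
    · subst hy; simp [hx]
    · simp [hy]
  simp only [LinExpr.eval, incrPart, Finset.sum_congr rfl fun y _ => hsplit y,
    Finset.sum_add_distrib, Finset.sum_ite_eq', Finset.mem_univ, if_true]
  ring

lemma execSeq_append {VB VN A : Type} [Fintype VN] (acts : A → Act VB VN)
    (l₁ l₂ : List A) (s : PState VB VN) :
    execSeq acts (l₁ ++ l₂) s = (execSeq acts l₁ s).bind (execSeq acts l₂) := by
  induction l₁ generalizing s with
  | nil => rfl
  | cons a l ih =>
    simp only [List.cons_append, execSeq]
    split_ifs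
    · exact ih _
    · rfl

lemma execSeq_flatten_ofFn {VB VN A : Type} [Fintype VN] (acts : A → Act VB VN) {n : ℕ}
    (s : Fin (n + 1) → PState VB VN) (αs : Fin n → List A)
    (h : ∀ i : Fin n, execSeq acts (αs i) (s i.castSucc) = some (s i.succ)) :
    execSeq acts (List.ofFn αs).flatten (s 0) = some (s (Fin.last n)) := by
  induction n with
  | zero => rfl
  | succ n ih =>
    have h0 := h 0
    rw [Fin.castSucc_zero] at h0
    rw [List.ofFn_succ, List.flatten_cons, execSeq_append, h0, Option.bind_some]
    exact ih (fun i => s i.succ) (fun i => αs i.succ) fun i => by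
      simpa only [Fin.succ_castSucc] using h i.succ

lemma PState.ext {VB VN : Type} {s t : PState VB VN} (hB : s.boolVal = t.boolVal)
    (hN : s.numVal = t.numVal) : s = t := by
  cases s
  cases t
  congr

section RolledStep

variable {VB VN A : Type} {P : Problem VB VN A}
  {β : VB → Bool} {ν : VN → ℚ} {u : A → ℕ} {β' : VB → Bool} {ν' : VN → ℚ}

variable (P β ν u β' ν') in
noncomputable def interimState (D : Set A) : PState VB VN where
  boolVal v := if ∃ a ∈ D, 0 < u a ∧ (P.acts a).assignsB v then β' v else β v
  numVal x := if ∃ a ∈ D, 0 < u a ∧ (P.acts a).assignsN x then ν' x else ν x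

lemma interimState_empty : interimState P β ν u β' ν' ∅ = ⟨β, ν⟩ := by
  simp [interimState]

lemma interimState_insert_of_eq_zero {a : A} (ha : u a = 0) (D : Set A) :
    interimState P β ν u β' ν' (insert a D) = interimState P β ν u β' ν' D := by
  simp [interimState, ha]

variable [Fintype VN]

lemma TR.not_mutexCond (hT : TR P β ν u β' ν') {a b : A} (hab : a ≠ b)
    (ha : 0 < u a) (hb : 0 < u b) : ¬ mutexCond (P.acts a) (P.acts b) := fun h => by
  obtain ⟨-, -, -, -, -, hmutex, -⟩ := hT
  have := hmutex a b hab h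
  omega

lemma TR.interimState_univ (hT : TR P β ν u β' ν') :
    interimState P β ν u β' ν' Set.univ = ⟨β', ν'⟩ := by
  obtain ⟨-, -, -, hframeB, hframeN, -⟩ := hT
  simp only [interimState, Set.mem_univ, true_and, PState.mk.injEq]
  constructor
  · funext v
    split_ifs with h
    · rfl
    · push Not at h
      exact (hframeB v fun a ha => Nat.eq_zero_of_not_pos fun hu => h a hu ha).symm
  · funext x
    split_ifs with h
    · rfl
    · push Not at h
      exact (hframeN x fun a ha => Nat.eq_zero_of_not_pos fun hu => h a hu ha).symm

lemma TR.interimState_numVal_of_occurs (hT : TR P β ν u β' ν') {a : A} (ha : 0 < u a)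
    {D : Set A} (haD : a ∉ D) {x : VN}
    (hx : occursInEff (P.acts a) x ∨ occursInPre (P.acts a) x) :
    (interimState P β ν u β' ν' D).numVal x = ν x := by
  refine if_neg ?_
  rintro ⟨b, hbD, hb, hbx⟩
  exact hT.not_mutexCond (ne_of_mem_of_not_mem hbD haD) hb ha (Or.inr (Or.inr ⟨x, hbx, hx⟩))

lemma TR.holds_preB_interimState (hT : TR P β ν u β' ν') {a : A} (ha : 0 < u a)
    {D : Set A} (haD : a ∉ D) {c : PropCond VB} (hc : c ∈ (P.acts a).preB) :
    c.holds (interimState P β ν u β' ν' D).boolVal := by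
  obtain ⟨hpreF, hpreT, -⟩ := hT.1 a ha
  have hwritten : ∀ v, (∃ b ∈ D, 0 < u b ∧ (P.acts b).assignsB v) →
      ∃ b, b ≠ a ∧ 0 < u b ∧ (P.acts b).effB v = some (β' v) := by
    rintro v ⟨b, hbD, hb, hbv⟩
    obtain ⟨bo, hbo⟩ := Option.ne_none_iff_exists'.mp hbv
    refine ⟨b, ne_of_mem_of_not_mem hbD haD, hb, ?_⟩
    rwa [(hT.2.2.1 b hb).1 v bo hbo]
  cases c with
  | isTrue v =>
    show (if _ then _ else _) = true
    split_ifs with h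
    · obtain ⟨b, hba, hb, hbv⟩ := hwritten v h
      by_contra hv
      rw [Bool.not_eq_true] at hv
      exact hT.not_mutexCond hba.symm ha hb (Or.inr (Or.inl ⟨v, hc, hv ▸ hbv⟩))
    · exact hpreT v hc
  | isFalse v =>
    show (if _ then _ else _) = false
    split_ifs with h
    · obtain ⟨b, hba, hb, hbv⟩ := hwritten v h
      by_contra hv
      rw [Bool.not_eq_false] at hv
      exact hT.not_mutexCond hba.symm ha hb (Or.inl ⟨v, hc, hv ▸ hbv⟩)
    · exact hpreF v hc

lemma TR.execIn_interimState (hT : TR P β ν u β' ν') {a : A} (ha : 0 < u a)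
    {D : Set A} (haD : a ∉ D) : (P.acts a).execIn (interimState P β ν u β' ν' D) := by
  refine ⟨fun c hc => hT.holds_preB_interimState ha haD hc, fun c hc => ?_⟩
  show c.op.holds (c.expr.eval _)
  rw [c.expr.eval_congr fun x hx =>
    hT.interimState_numVal_of_occurs ha haD (Or.inr ⟨c, hc, hx⟩)]
  exact (hT.1 a ha).2.2 c hc

lemma TR.result_interimState (hT : TR P β ν u β' ν') {a : A} (ha : u a = 1)
    {D : Set A} (haD : a ∉ D) :
    (P.acts a).result (interimState P β ν u β' ν' D) =
      interimState P β ν u β' ν' (insert a D) := by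
  have hpos : 0 < u a := by omega
  obtain ⟨heffB, heffN⟩ := hT.2.2.1 a hpos
  refine PState.ext (funext fun v => ?_) (funext fun x => ?_)
  · show ((P.acts a).effB v).getD _ = _
    cases hv : (P.acts a).effB v with
    | some bo =>
      rw [Option.getD_some, ← heffB v bo hv]
      exact (if_pos ⟨a, Set.mem_insert a D, hpos, by simp [Act.assignsB, hv]⟩).symm
    | none =>
      exact if_congr (by simp [Act.assignsB, hv]) rfl rfl
  · show (match (P.acts a).effN x with
      | none => (interimState P β ν u β' ν' D).numVal x
      | some e => e.eval (interimState P β ν u β' ν' D).numVal) = _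
    cases hx : (P.acts a).effN x with
    | some e =>
      show e.eval _ = _
      rw [e.eval_congr fun y hy =>
        hT.interimState_numVal_of_occurs hpos haD (Or.inl (Or.inr ⟨x, e, hx, hy⟩))]
      refine Eq.trans ?_ (if_pos ⟨a, Set.mem_insert a D, hpos, by simp [Act.assignsN, hx]⟩).symm
      by_cases hincr : (P.acts a).isIncr x e
      · rw [(heffN x e hx).1 hincr, ha, Nat.cast_one, one_mul, add_eval_incrPart hincr.1]
      · exact ((heffN x e hx).2 hincr).symm
    | none =>
      exact if_congr (by simp [Act.assignsN, hx]) rfl rfl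

lemma TR.execSeq_replicate_interimState (hT : TR P β ν u β' ν') {a : A} (ha : u a ≤ 1)
    {D : Set A} (haD : a ∉ D) :
    execSeq P.acts (List.replicate (u a) a) (interimState P β ν u β' ν' D) =
      some (interimState P β ν u β' ν' (insert a D)) := by
  rcases Nat.le_one_iff_eq_zero_or_eq_one.mp ha with h0 | h1
  · rw [h0, interimState_insert_of_eq_zero h0]
    rfl
  · rw [h1, List.replicate_one, execSeq, if_pos (hT.execIn_interimState (by omega) haD),
      hT.result_interimState h1 haD]
    rfl

lemma TR.execSeq_flatMap_interimState (hT : TR P β ν u β' ν') :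
    ∀ {l : List A} {D : Set A}, l.Nodup → (∀ a ∈ l, a ∉ D ∧ u a ≤ 1) →
    execSeq P.acts (l.flatMap fun a => List.replicate (u a) a)
      (interimState P β ν u β' ν' D) =
      some (interimState P β ν u β' ν' (D ∪ {a | a ∈ l}))
  | [], D, _, _ => by simp [execSeq]
  | a :: l, D, hnd, hl => by
    obtain ⟨hal, hnd⟩ := List.nodup_cons.mp hnd
    obtain ⟨haD, ha⟩ := hl a List.mem_cons_self
    rw [List.flatMap_cons, execSeq_append, hT.execSeq_replicate_interimState ha haD,
      Option.bind_some, hT.execSeq_flatMap_interimState hnd fun b hb =>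
        ⟨by rintro (rfl | hbD); exacts [hal hb, (hl b (List.mem_cons_of_mem a hb)).1 hbD],
          (hl b (List.mem_cons_of_mem a hb)).2⟩]
    congr 2
    ext b
    simp only [Set.mem_union, Set.mem_insert_iff, Set.mem_ofPred_eq, List.mem_cons]
    tauto

lemma TS.execSeq_of_decodesRolled (hT : TS P β ν u β' ν') {α : List A}
    (hα : decodesRolled u α) : execSeq P.acts α ⟨β, ν⟩ = some ⟨β', ν'⟩ := by
  obtain ⟨l, hnd, hall, rfl⟩ := hα
  have := hT.1.execSeq_flatMap_interimState (D := ∅) hnd fun a _ => ⟨id, hT.2 a⟩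
  have hl : {a | a ∈ l} = Set.univ := Set.eq_univ_of_forall hall
  rwa [interimState_empty, Set.empty_union, hl, hT.1.interimState_univ] at this

end RolledStep

theorem standard_encoding_correct_general
    {VB VN A : Type} [Fintype VN]
    (P : Problem VB VN A) (n : ℕ) (m : RModel VB VN A n) (hm : m.validS P)
    (α : List A) (hα : m.plans α) :
    P.isPlan α := by
  obtain ⟨hβ0, hν0, hT, hgoal⟩ := hm
  obtain ⟨αs, hdec, rfl⟩ := hα
  have hexec := execSeq_flatten_ofFn P.acts (fun i => ⟨m.β i, m.ν i⟩) αs fun i =>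
    (hT i).execSeq_of_decodesRolled (hdec i)
  rw [hβ0, hν0] at hexec
  exact ⟨_, hexec, hgoal⟩

/-- the standard encoding `Π^S` is correct: for every bound `n`,
every action sequence in `(Π^S_n)⁻¹` is a valid plan. -/
theorem standard_encoding_correct
    {VB VN A : Type} [Fintype VB] [Fintype VN] [Fintype A]
    (P : Problem VB VN A) (n : ℕ) (m : RModel VB VN A n) (hm : m.validS P)
    (α : List A) (hα : m.plans α) :
    P.isPlan α :=
  standard_encoding_correct_general P n m hm α hα
end PatternPlanning
end

section
/- For every numeric planning problem Π, the rolled-up encoding Π^R of Π is complete: if Π has a valid plan, then Π^R_n is satisfiable for some bound n ≥ 0. -/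
open scoped Classical

namespace PatternPlanning

/-! ### Auxiliary material for completeness of `Π^R` -/

/-- The state reached after executing the first `k` actions of `α` from `s`. -/
noncomputable def stSeq {VB VN A : Type} [Fintype VN] (acts : A → Act VB VN) :
    List A → PState VB VN → ℕ → PState VB VN
  | [], s, _ => s
  | _ :: _, s, 0 => s
  | a :: rest, s, (k + 1) => stSeq acts rest ((acts a).result s) k

lemma stSeq_zero {VB VN A : Type} [Fintype VN] (acts : A → Act VB VN)
    (α : List A) (s : PState VB VN) : stSeq acts α s 0 = s := by
  cases α <;> rfl

lemma exec_stSeq {VB VN A : Type} [Fintype VN] (acts : A → Act VB VN) :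
    ∀ (α : List A) (s t : PState VB VN), execSeq acts α s = some t →
      stSeq acts α s α.length = t ∧
      ∀ i (h : i < α.length),
        (acts (α.get ⟨i, h⟩)).execIn (stSeq acts α s i) ∧
        stSeq acts α s (i + 1) = (acts (α.get ⟨i, h⟩)).result (stSeq acts α s i)
  | [], s, t, hex => by
      simp only [execSeq, Option.some.injEq] at hex
      exact ⟨hex, fun i hi => absurd hi (by simp)⟩
  | a :: rest, s, t, hex => by
      rw [execSeq] at hex
      by_cases hq : (acts a).execIn s
      · rw [if_pos hq] at hex
        obtain ⟨h1, h2⟩ := exec_stSeq acts rest ((acts a).result s) t hex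
        refine ⟨h1, fun i hi => ?_⟩
        match i with
        | 0 =>
            refine ⟨by simpa [stSeq_zero] using hq, ?_⟩
            show stSeq acts rest ((acts a).result s) 0 = _
            rw [stSeq_zero, stSeq_zero]
            rfl
        | (j + 1) =>
            exact h2 j (by simpa using hi)
      · rw [if_neg hq] at hex; exact absurd hex (by simp)

lemma incr_eval {VN : Type} [Fintype VN] (e : LinExpr VN) (x : VN) (ν : VN → ℚ)
    (hx : e.coeff x = 1) : e.eval ν = ν x + (incrPart e x).eval ν := by
  unfold LinExpr.eval incrPart
  have hfun : (fun y => Function.update e.coeff x 0 y * ν y) =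
      Function.update (fun y => e.coeff y * ν y) x 0 := by
    funext y
    by_cases hy : y = x
    · subst hy; simp
    · simp [Function.update_of_ne hy]
  rw [hfun, Finset.sum_update_of_mem (Finset.mem_univ x),
    ← Finset.add_sum_erase Finset.univ (fun y => e.coeff y * ν y) (Finset.mem_univ x)]
  simp only [Finset.sdiff_singleton_eq_erase]
  rw [hx]
  ring

lemma TR_single {VB VN A : Type} [Fintype VN] (P : Problem VB VN A) (a0 : A)
    (s : PState VB VN) (h : (P.acts a0).execIn s) :
    TR P s.boolVal s.numVal (fun b => if b = a0 then 1 else 0)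
      ((P.acts a0).result s).boolVal ((P.acts a0).result s).numVal := by
  have hle : ∀ a : A, (if a = a0 then 1 else 0) ≤ 1 := by
    intro a; split <;> simp
  have heq : ∀ a : A, 0 < (if a = a0 then (1:ℕ) else 0) → a = a0 := by
    intro a ha; by_contra hne; simp [hne] at ha
  obtain ⟨hB, hN⟩ := h
  refine ⟨?_, ?_, ?_, ?_, ?_, ?_, ?_⟩
  · intro b hb
    obtain rfl : a0 = b := (heq b hb).symm
    exact ⟨fun v hv => hB _ hv, fun v hv => hB _ hv, hN⟩
  · intro b hb
    have hb' : 1 < (if b = a0 then 1 else 0) := hb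
    have := hle b
    omega
  · intro b hb
    obtain rfl : a0 = b := (heq b hb).symm
    simp only [if_pos rfl]
    constructor
    · intro v b hvb
      simp [Act.result, hvb]
    · intro x e hx
      constructor
      · intro hincr
        have : ((P.acts a0).result s).numVal x = e.eval s.numVal := by
          simp [Act.result, hx]
        rw [this, incr_eval e x s.numVal hincr.1]
        push_cast; ring
      · intro _
        simp [Act.result, hx]
  · intro v hv
    have hnone : (P.acts a0).effB v = none := by
      by_contra hne
      have := hv a0 hne
      simp at this
    simp [Act.result, hnone]
  · intro x hx
    have hnone : (P.acts a0).effN x = none := by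
      by_contra hne
      have := hx a0 hne
      simp at this
    simp [Act.result, hnone]
  · intro a₁ a₂ hne _
    by_cases h1 : a₁ = a0
    · right; subst h1; simp [Ne.symm hne]
    · left; simp [h1]
  · intro a _; exact hle a

/-- the rolled-up encoding `Π^R` is complete: if `Π` has a valid plan,
then `Π^R_n` is satisfiable for some bound `n ≥ 0`. -/
theorem rolledup_encoding_complete
    {VB VN A : Type} [Fintype VB] [Fintype VN] [Fintype A]
    (P : Problem VB VN A) (h : P.hasPlan) :
    ∃ n : ℕ, satR P n := by
  obtain ⟨α, s, hexec, hgoal⟩ := h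
  obtain ⟨hlast, hsteps⟩ := exec_stSeq P.acts α P.init s hexec
  refine ⟨α.length,
    ⟨fun i => (stSeq P.acts α P.init i).boolVal,
     fun i => (stSeq P.acts α P.init i).numVal,
     fun i a => if a = α.get ⟨i.val, i.isLt⟩ then 1 else 0⟩, ?_, ?_, ?_, ?_⟩
  · show (stSeq P.acts α P.init ((0 : Fin (α.length + 1)) : ℕ)).boolVal = _
    rw [Fin.val_zero, stSeq_zero]
  · show (stSeq P.acts α P.init ((0 : Fin (α.length + 1)) : ℕ)).numVal = _
    rw [Fin.val_zero, stSeq_zero]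
  · intro i
    obtain ⟨hex, hres⟩ := hsteps i.val i.isLt
    show TR P (stSeq P.acts α P.init (i.castSucc : ℕ)).boolVal
      (stSeq P.acts α P.init (i.castSucc : ℕ)).numVal _
      (stSeq P.acts α P.init (i.succ : ℕ)).boolVal
      (stSeq P.acts α P.init (i.succ : ℕ)).numVal
    rw [Fin.coe_castSucc, Fin.val_succ, hres]
    exact TR_single P (α.get ⟨i.val, i.isLt⟩) _ hex
  · show P.goalSat
      (stSeq P.acts α P.init ((Fin.last α.length : Fin (α.length + 1)) : ℕ)).boolVal
      (stSeq P.acts α P.init ((Fin.last α.length : Fin (α.length + 1)) : ℕ)).numVal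
    rw [Fin.val_last, hlast]
    exact hgoal
end PatternPlanning
end

section
/- For every numeric planning problem Π and every total order < of the actions of Π, the R²∃ <-encoding Π^< of Π is complete: if Π has a valid plan, then Π^<_n is satisfiable for some bound n ≥ 0. -/
open scoped Classical

namespace PatternPlanning

/-!
A valid plan `a₀; …; aₙ₋₁` is simulated by `n` steps of `Π^<`, step `i` taking only the
action `aᵢ`. In that step the fresh variable `x^b` holds the value of `x` after `aᵢ` if
`aᵢ` is not later than `b` in `<`, and its value before `aᵢ` otherwise; then each
`x^{≪,b}` evaluates to the state in which `b` is applied, so all clauses of `T^<` hold.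
-/

section Order

variable {A : Type}

theorem not_mem_before_self (ord : List A) (a : A) : a ∉ before ord a := by
  intro h
  simpa using List.mem_takeWhile_imp h

theorem before_prefix (ord : List A) (b : A) : before ord b <+: ord :=
  List.takeWhile_prefix _

theorem before_eq_of_prefix {ord l : List A} {b : A} (hnd : ord.Nodup) (h : l ++ [b] <+: ord) :
    before ord b = l := by
  obtain ⟨t, rfl⟩ := h
  have hb : b ∉ l := by
    simp only [List.append_assoc, List.singleton_append] at hnd
    exact fun hbl => List.disjoint_of_nodup_append hnd hbl List.mem_cons_self
  rw [before, List.append_assoc, List.singleton_append,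
    List.takeWhile_append_of_pos fun c hc => by simpa using ne_of_mem_of_not_mem hc hb,
    List.takeWhile_cons_of_neg (by simp), List.append_nil]

/-- The value of `x^b` in a step of `Π^<` that takes only the action `a`, from `s` to `s'`. -/
noncomputable def stepAux (ord : List A) (a : A) {X : Type} (s s' : X) (b : A) : X :=
  if a ∈ before ord b ∨ b = a then s' else s

variable {ord : List A} {a : A}

theorem stepAux_apply {X Y : Type} (f g : X → Y) (b : A) (x : X) :
    stepAux ord a f g b x = stepAux ord a (f x) (g x) b :=
  apply_ite (fun h : X → Y => h x) _ _ _

theorem foldl_stepAux (hnd : ord.Nodup) {X : Type} {q : A → Bool} {x y : X}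
    (hq : q a = false → y = x) {l : List A} (hl : l <+: ord) :
    l.foldl (fun val b => if q b then stepAux ord a x y b else val) x = if a ∈ l then y else x := by
  induction l using List.reverseRecOn with
  | nil => simp
  | append_singleton l b ih =>
    rw [List.foldl_append, List.foldl_cons, List.foldl_nil,
      ih ((List.prefix_append l [b]).trans hl), stepAux, before_eq_of_prefix hnd hl]
    cases hb : q b
    · by_cases hab : a = b
      · subst hab; simp [hq hb]
      · simp [hab]
    · simp [eq_comm]

end Order

section SingleStep

variable {VB VN A : Type} {ord : List A} {a : A}

theorem chainB_stepAux (acts : A → Act VB VN) (hnd : ord.Nodup) {β β' : VB → Bool}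
    (hframe : ∀ v, (acts a).effB v = none → β' v = β v) {l : List A} (hl : l <+: ord) (v : VB) :
    chainB acts l β (stepAux ord a β β') v = if a ∈ l then β' v else β v := by
  simp only [chainB, stepAux_apply]
  exact foldl_stepAux hnd
    (fun h => hframe v (Option.not_isSome_iff_eq_none.mp (by simpa using h))) hl

theorem chainN_stepAux (acts : A → Act VB VN) (hnd : ord.Nodup) {ν ν' : VN → ℚ}
    (hframe : ∀ x, (acts a).effN x = none → ν' x = ν x) {l : List A} (hl : l <+: ord) (x : VN) :
    chainN acts l ν (stepAux ord a ν ν') x = if a ∈ l then ν' x else ν x := by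
  simp only [chainN, stepAux_apply]
  exact foldl_stepAux hnd
    (fun h => hframe x (Option.not_isSome_iff_eq_none.mp (by simpa using h))) hl

variable [Fintype VN]

theorem Tlt_of_execIn (P : Problem VB VN A) (hnd : ord.Nodup) (hall : ∀ b, b ∈ ord)
    {s : PState VB VN} (hex : (P.acts a).execIn s) :
    Tlt P ord s.boolVal s.numVal (fun b => decide (b = a))
      (stepAux ord a s.boolVal ((P.acts a).result s).boolVal)
      (stepAux ord a s.numVal ((P.acts a).result s).numVal)
      ((P.acts a).result s).boolVal ((P.acts a).result s).numVal := by
  set s' := (P.acts a).result s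
  have hframeB : ∀ v, (P.acts a).effB v = none → s'.boolVal v = s.boolVal v := by
    intro v hv; simp [s', Act.result, hv]
  have hframeN : ∀ x, (P.acts a).effN x = none → s'.numVal x = s.numVal x := by
    intro x hx; simp [s', Act.result, hx]
  have chB {l : List A} (hl : l <+: ord) := chainB_stepAux P.acts hnd hframeB hl
  have chN {l : List A} (hl : l <+: ord) := chainN_stepAux P.acts hnd hframeN hl
  have hpre := before_prefix ord
  have hself := not_mem_before_self ord a
  have chN_before : chainN P.acts (before ord a) s.numVal (stepAux ord a s.numVal s'.numVal)
      = s.numVal := funext fun x => by rw [chN (hpre a), if_neg hself]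
  refine ⟨?pre, ?effB, ?effN, fun v => ?frameB, fun x => ?frameN⟩
  case pre =>
    intro b hb
    obtain rfl : b = a := by simpa using hb
    refine ⟨fun v hv => ?_, fun v hv => ?_, fun c hc => ?_⟩
    · rw [chB (hpre b), if_neg hself]; exact hex.1 _ hv
    · rw [chB (hpre b), if_neg hself]; exact hex.1 _ hv
    · rw [chN_before]; exact hex.2 c hc
  case effB =>
    intro b v w hw
    refine ⟨fun hb => ?_, fun hb => ?_⟩
    · obtain rfl : b = a := by simpa using hb
      simp [stepAux, s', Act.result, hw]
    · have hba : b ≠ a := by simpa using hb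
      rw [chB (hpre b), stepAux_apply]; simp [stepAux, hba]
  case effN =>
    intro b x e he
    refine ⟨fun hb => ?_, fun hb => ?_⟩
    · obtain rfl : b = a := by simpa using hb
      rw [chN_before]; simp [stepAux, s', Act.result, he]
    · have hba : b ≠ a := by simpa using hb
      rw [chN (hpre b), stepAux_apply]; simp [stepAux, hba]
  case frameB => rw [chB (List.prefix_refl ord), if_pos (hall a)]
  case frameN => rw [chN (List.prefix_refl ord), if_pos (hall a)]

end SingleStep

section Runs

variable {VB VN A : Type} [Fintype VN]

def LtModel.IsRun {n : ℕ} (m : LtModel VB VN A n) (P : Problem VB VN A) (ord : List A)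
    (s t : PState VB VN) : Prop :=
  m.β 0 = s.boolVal ∧ m.ν 0 = s.numVal ∧
  (∀ i : Fin n, Tlt P ord (m.β i.castSucc) (m.ν i.castSucc) (m.actb i)
      (m.auxB i) (m.auxN i) (m.β i.succ) (m.ν i.succ)) ∧
  m.β (Fin.last n) = t.boolVal ∧ m.ν (Fin.last n) = t.numVal

theorem exists_isRun_of_execSeq (P : Problem VB VN A) {ord : List A} (hnd : ord.Nodup)
    (hall : ∀ b, b ∈ ord) :
    ∀ (α : List A) (s t : PState VB VN), execSeq P.acts α s = some t →
      ∃ m : LtModel VB VN A α.length, m.IsRun P ord s t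
  | [], s, t, h => by
    obtain rfl : s = t := Option.some.inj h
    exact ⟨⟨fun _ => s.boolVal, fun _ => s.numVal, Fin.elim0, Fin.elim0, Fin.elim0⟩,
      rfl, rfl, fun i => i.elim0, rfl, rfl⟩
  | a :: α, s, t, h => by
    rw [execSeq] at h
    split_ifs at h with hex
    obtain ⟨m, h0B, h0N, hT, hlastB, hlastN⟩ := exists_isRun_of_execSeq P hnd hall α _ t h
    refine ⟨⟨Fin.cons s.boolVal m.β, Fin.cons s.numVal m.ν,
      Fin.cons (fun b => decide (b = a)) m.actb,
      Fin.cons (stepAux ord a s.boolVal ((P.acts a).result s).boolVal) m.auxB,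
      Fin.cons (stepAux ord a s.numVal ((P.acts a).result s).numVal) m.auxN⟩,
      rfl, rfl, Fin.cases ?first fun i => ?_, ?lastB, ?lastN⟩
    case first => simpa [h0B, h0N] using Tlt_of_execIn P hnd hall hex
    case lastB => simpa [← Fin.succ_last] using hlastB
    case lastN => simpa [← Fin.succ_last] using hlastN
    simpa [← Fin.succ_castSucc] using hT i

end Runs

theorem r2e_encoding_complete_general
    {VB VN A : Type} [Fintype VN]
    (P : Problem VB VN A) (ord : List A) (hnd : ord.Nodup) (hall : ∀ a : A, a ∈ ord)
    (h : P.hasPlan) :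
    ∃ n : ℕ, satLt P ord n := by
  obtain ⟨α, t, hα, hgoal⟩ := h
  obtain ⟨m, h0B, h0N, hT, hlastB, hlastN⟩ := exists_isRun_of_execSeq P hnd hall α P.init t hα
  exact ⟨α.length, m, h0B, h0N, hT, hlastB ▸ hlastN ▸ hgoal⟩

/-- for every total order `<` of the actions, the R²∃ `<`-encoding `Π^<`
is complete: if `Π` has a valid plan, then `Π^<_n` is satisfiable for some `n ≥ 0`. -/
theorem r2e_encoding_complete
    {VB VN A : Type} [Fintype VB] [Fintype VN] [Fintype A]
    (P : Problem VB VN A) (ord : List A) (hnd : ord.Nodup) (hall : ∀ a : A, a ∈ ord)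
    (h : P.hasPlan) :
    ∃ n : ℕ, satLt P ord n :=
  r2e_encoding_complete_general P ord hnd hall h

end PatternPlanning
end

section
/- For every numeric planning problem Π, every pattern ≺ and every action a ∈ A, the pattern (≺;a)-encoding Π^{≺;a} dominates the pattern ≺-encoding Π^≺: for every bound n ≥ 0, if Π^≺_n is satisfiable then Π^{≺;a}_n is satisfiable. -/
open scoped Classical

namespace PatternPlanning

private lemma sigB_congr {VB VN A : Type} (acts : A → Act VB VN)
    (p1 p2 : List A) (a1 a2 : ℕ → ℕ) (β : VB → Bool) :
    ∀ k, (∀ j, j < k → p1[j]? = p2[j]? ∧ a1 j = a2 j) →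
      sigB acts p1 a1 β k = sigB acts p2 a2 β k := by
  intro k
  induction k with
  | zero => intro _; rfl
  | succ k ih =>
    intro h
    have hk := h k (Nat.lt_succ_self k)
    have ih' := ih (fun j hj => h j (hj.trans (Nat.lt_succ_self k)))
    funext v
    simp only [sigB, hk.1, hk.2, ih']

private lemma sigN_congr {VB VN A : Type} [Fintype VN] (acts : A → Act VB VN)
    (p1 p2 : List A) (a1 a2 : ℕ → ℕ) (x1 x2 : ℕ → VN → ℚ) (ν : VN → ℚ) :
    ∀ k, (∀ j, j < k → p1[j]? = p2[j]? ∧ a1 j = a2 j ∧ x1 j = x2 j) →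
      sigN acts p1 a1 x1 ν k = sigN acts p2 a2 x2 ν k := by
  intro k
  induction k with
  | zero => intro _; rfl
  | succ k ih =>
    intro h
    have hk := h k (Nat.lt_succ_self k)
    have ih' := ih (fun j hj => h j (hj.trans (Nat.lt_succ_self k)))
    funext x
    simp only [sigN, hk.1, hk.2.1, hk.2.2, ih']

/-- for every pattern `≺` and action `a`, the pattern `(≺;a)`-encoding
dominates the pattern `≺`-encoding: for every bound `n`, if `Π^≺_n` is satisfiable
then `Π^{≺;a}_n` is satisfiable. -/
theorem pattern_extension_dominates
    {VB VN A : Type} [Fintype VB] [Fintype VN] [Fintype A]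
    (P : Problem VB VN A) (pat : List A) (a : A) (n : ℕ)
    (h : satPat P pat n) :
    satPat P (pat ++ [a]) n := by
  obtain ⟨m, hβ0, hν0, hT, hG⟩ := h
  set L := pat.length with hL
  refine ⟨⟨m.β, m.ν,
    fun i j => if j < L then m.act i j else 0,
    fun i j => if j < L then m.aux i j
      else sigN P.acts pat (m.act i) (m.aux i) (m.ν i.castSucc) L⟩,
    hβ0, hν0, ?_, hG⟩
  intro i
  obtain ⟨hpre, hfrB, hfrN⟩ := hT i
  set act := m.act i with hact
  set aux := m.aux i with haux
  set β := m.β i.castSucc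
  set ν := m.ν i.castSucc
  set act' : ℕ → ℕ := fun j => if j < L then act j else 0 with hact'
  set aux' : ℕ → VN → ℚ := fun j => if j < L then aux j
      else sigN P.acts pat act aux ν L with haux'
  have hcong : ∀ j, j < L → (pat ++ [a])[j]? = pat[j]? ∧ act' j = act j ∧ aux' j = aux j := by
    intro j hj
    refine ⟨?_, if_pos hj, if_pos hj⟩
    rw [List.getElem?_append_left hj]
  have hB : ∀ k, k ≤ L → sigB P.acts (pat ++ [a]) act' β k = sigB P.acts pat act β k := by
    intro k hk
    exact sigB_congr _ _ _ _ _ _ k (fun j hj => ⟨(hcong j (lt_of_lt_of_le hj hk)).1,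
      (hcong j (lt_of_lt_of_le hj hk)).2.1⟩)
  have hN : ∀ k, k ≤ L →
      sigN P.acts (pat ++ [a]) act' aux' ν k = sigN P.acts pat act aux ν k := by
    intro k hk
    exact sigN_congr _ _ _ _ _ _ _ _ k (fun j hj => hcong j (lt_of_lt_of_le hj hk))
  have hgetL : (pat ++ [a])[L]? = some a := by
    simp [hL]
  have hactL : act' L = 0 := if_neg (lt_irrefl L)
  have hauxL : aux' L = sigN P.acts pat act aux ν L := if_neg (lt_irrefl L)
  have hB1 : sigB P.acts (pat ++ [a]) act' β (L + 1) = sigB P.acts pat act β L := by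
    funext v
    simp only [sigB, hgetL, hactL, hB L le_rfl]
    rcases hh : (P.acts a).effB v with _ | b
    · rfl
    · cases b <;> simp
  have hN1 : sigN P.acts (pat ++ [a]) act' aux' ν (L + 1) = sigN P.acts pat act aux ν L := by
    funext x
    simp only [sigN, hgetL, hactL, hN L le_rfl]
    rcases hh : (P.acts a).effN x with _ | e
    · rfl
    · by_cases hi : (P.acts a).isIncr x e
      · simp [hi]
      · simp [hi, hauxL]
  have hlen : (pat ++ [a]).length = L + 1 := by simp [hL]
  show Tpat P (pat ++ [a]) β ν act' aux' (m.β i.succ) (m.ν i.succ)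
  refine ⟨?_, ?_, ?_⟩
  · intro j hj
    rcases Nat.lt_or_ge j L with hjL | hjL
    · -- j < L : transfer from the pattern `pat`
      have hget : (pat ++ [a]).get ⟨j, hj⟩ = pat.get ⟨j, hjL⟩ :=
        List.getElem_append_left hjL
      obtain ⟨h1, h2, h3, h4, h5⟩ := hpre j hjL
      have e1 := hB j hjL.le
      have e2 := hN j hjL.le
      have e3 := (hcong j hjL).2.1
      have e4 := (hcong j hjL).2.2
      rw [hget, e1, e2, e3, e4]
      exact ⟨h1, h2, h3, h4, h5⟩
    · -- j = L : the new action, with `act' L = 0`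
      have hjL' : j = L := by
        have := hlen ▸ hj
        omega
      subst hjL'
      rw [hactL]
      refine ⟨fun v _ h0 => absurd h0 (lt_irrefl 0), fun v _ h0 => absurd h0 (lt_irrefl 0),
        fun c _ => ⟨fun h0 => absurd h0 (lt_irrefl 0), fun h0 => by omega⟩,
        fun x e _ _ => ⟨fun _ => ?_, fun h0 => absurd h0 (lt_irrefl 0)⟩,
        fun _ => Nat.zero_le 1⟩
      rw [hauxL, hN L le_rfl]
  · intro v
    rw [show (pat ++ [a]).length = L + 1 from hlen, hB1]
    exact hfrB v
  · intro x
    rw [show (pat ++ [a]).length = L + 1 from hlen, hN1]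
    exact hfrN x
end PatternPlanning
end
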